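/- arXiv:2605.07625 — 2 statements merged into one kernel-verified Lean document; each statement's English description precedes it below -/
import Mathlib

section
/- Let d ≥ 3 be an integer, let z0 ∈ ℝ^d with z0 ≠ 0, and let R ∈ (0,1) with ‖z0‖ < R. For ε ∈ (0,1) and z ∈ ℝ^d define G_{1−ε}(z,z0) = ‖z−z0‖^{2−d} − ((1−ε)/‖z0‖)^{d−2}·‖z − (1−ε)²·z0/‖z0‖²‖^{2−d}. Then there exists a constant C > 0, depending only on d, z0 and R (in particular independent of ε), such that for every ε ∈ (0, 1−R] and every z ∈ ℝ^d with R ≤ ‖z‖ ≤ 1 and z ≠ (1−ε)²·z0/‖z0‖², one has G_{1−ε}(z,z0) ≤ C·(1−‖z‖). -/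
open Metric RealInnerProductSpace

lemma pow_sub_pow_le_aux (m : ℕ) (A B : ℝ) (hA : 0 ≤ A) (hAB : A ≤ B) :
    B ^ (m+1) - A ^ (m+1) ≤ ((m:ℝ)+1) * B ^ m * (B - A) := by
  induction m with
  | zero => simp
  | succ n ih =>
    have hB : 0 ≤ B := hA.trans hAB
    have h1 : A ^ (n+1) ≤ B ^ (n+1) := pow_le_pow_left₀ hA hAB _
    have h3 : 0 ≤ B - A := by linarith
    calc B ^ (n+2) - A ^ (n+2) = B * (B ^ (n+1) - A ^ (n+1)) + (B - A) * A ^ (n+1) := by ring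
      _ ≤ B * (((n:ℝ)+1) * B ^ n * (B - A)) + (B - A) * B ^ (n+1) := by
          exact add_le_add (mul_le_mul_of_nonneg_left ih hB) (mul_le_mul_of_nonneg_left h1 h3)
      _ = ((↑(n+1):ℝ)+1) * B ^ (n+1) * (B - A) := by push_cast; ring

set_option maxHeartbeats 1600000 in
/-- Linear decay of the Green kernel near the boundary, uniformly in the early-stopping
parameter: for `d ≥ 3`, `z0 ≠ 0`, `‖z0‖ < R < 1`, there is a constant `C > 0` (independent
of `ε`) such that for all `ε ∈ (0, 1-R]` and all `z` with `R ≤ ‖z‖ ≤ 1` avoiding the image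
point, `G_{1-ε}(z, z0) ≤ C (1 - ‖z‖)`. -/
theorem green_kernel_linear_decay
    (d : ℕ) (hd : 3 ≤ d)
    (z0 : EuclideanSpace ℝ (Fin d)) (hz0 : z0 ≠ 0)
    (R : ℝ) (hR0 : 0 < R) (hR1 : R < 1) (hz0R : ‖z0‖ < R)
    (G : ℝ → EuclideanSpace ℝ (Fin d) → ℝ)
    (hG : ∀ ε z, G ε z =
      ‖z - z0‖ ^ (2 - (d : ℝ)) -
        ((1 - ε) / ‖z0‖) ^ ((d : ℝ) - 2) *
          ‖z - ((1 - ε) ^ 2 / ‖z0‖ ^ 2) • z0‖ ^ (2 - (d : ℝ))) :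
    ∃ C > 0, ∀ ε : ℝ, 0 < ε → ε ≤ 1 - R →
      ∀ z : EuclideanSpace ℝ (Fin d), R ≤ ‖z‖ → ‖z‖ ≤ 1 →
        z ≠ ((1 - ε) ^ 2 / ‖z0‖ ^ 2) • z0 →
        G ε z ≤ C * (1 - ‖z‖) := by
  obtain ⟨m, hm⟩ : ∃ m : ℕ, d - 2 = m + 1 := ⟨d - 3, by omega⟩
  set t := ‖z0‖ with ht_def
  have ht : 0 < t := norm_pos_iff.mpr hz0
  set k : ℕ := d - 2 with hk_def
  have hk1 : 1 ≤ k := by omega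
  have hkR : (k : ℝ) = (d : ℝ) - 2 := by
    have h2 : (2:ℕ) ≤ d := by omega
    push_cast [hk_def, Nat.cast_sub h2]; ring
  set a : ℝ := R - t with ha_def
  have ha : 0 < a := by rw [ha_def]; linarith
  clear_value t a
  refine ⟨(k : ℝ) / a ^ d, by positivity, ?_⟩
  intro ε hε hεR z hzR hz1 hzne
  set r : ℝ := 1 - ε with hr_def
  have hrR : R ≤ r := by rw [hr_def]; linarith
  have hr0 : 0 < r := lt_of_lt_of_le hR0 hrR
  have hr1 : r < 1 := by rw [hr_def]; linarith
  set s : ℝ := r ^ 2 / t ^ 2 with hs_def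
  set A : ℝ := ‖z - z0‖ with hA_def
  set B : ℝ := ‖z - s • z0‖ with hB_def
  have hA0 : 0 < A := by
    rw [hA_def, norm_pos_iff, sub_ne_zero]
    intro h; rw [h] at hzR; linarith
  have haA : a ≤ A := by
    have h := norm_sub_norm_le z z0
    rw [← hA_def, ← ht_def] at h
    linarith
  have hB0 : 0 < B := by
    rw [hB_def, norm_pos_iff, sub_ne_zero]
    exact hzne
  -- inner-product expansions
  have hip : A ^ 2 = ‖z‖ ^ 2 - 2 * ⟪z, z0⟫ + t ^ 2 := by
    rw [hA_def, ht_def, norm_sub_sq_real]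
  have hipB : B ^ 2 = ‖z‖ ^ 2 - 2 * (s * ⟪z, z0⟫) + s ^ 2 * t ^ 2 := by
    have hs0 : 0 ≤ s := by positivity
    rw [hB_def, ht_def, norm_sub_sq_real, real_inner_smul_right, norm_smul,
      Real.norm_eq_abs, abs_of_nonneg hs0]
    ring
  set B' : ℝ := t / r * B with hB'_def
  have hB'0 : 0 < B' := by rw [hB'_def]; positivity
  set nz : ℝ := ‖z‖ with hnz_def
  have hnz0 : 0 ≤ nz := by rw [hnz_def]; positivity
  set ip : ℝ := ⟪z, z0⟫ with hip_def
  clear_value r s A B B' nz ip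
  -- rpow to pow conversion
  have hconv : ∀ x : ℝ, 0 < x → x ^ (2 - (d : ℝ)) = (x ^ k)⁻¹ := by
    intro x hx
    rw [show (2 - (d:ℝ)) = -(k:ℝ) by rw [hkR]; ring, Real.rpow_neg hx.le, Real.rpow_natCast]
  have hGform : G ε z = (A ^ k)⁻¹ - (B' ^ k)⁻¹ := by
    rw [hG, ← hA_def, show ((1 - ε) ^ 2 / t ^ 2 : ℝ) = s by rw [hs_def, hr_def], ← hB_def,
      hconv _ hA0, hconv _ hB0,
      show ((d:ℝ) - 2) = ((k:ℕ):ℝ) from hkR.symm, Real.rpow_natCast]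
    have h2 : (B' ^ k)⁻¹ = ((1 - ε) / t) ^ k * (B ^ k)⁻¹ := by
      rw [hB'_def, mul_pow, mul_inv, ← inv_pow, inv_div, hr_def]
    rw [h2]
  -- key identity
  have hkey : r ^ 2 * B' ^ 2 = r ^ 2 * A ^ 2 + (r ^ 2 - t ^ 2) * (r ^ 2 - nz ^ 2) := by
    have hB'2 : r ^ 2 * B' ^ 2 = t ^ 2 * B ^ 2 := by
      rw [hB'_def]; field_simp
    rw [hB'2, hipB, hip, hs_def]
    field_simp
    ring
  have hc0 : 0 < r ^ 2 - t ^ 2 := by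
    have htr : t < r := lt_of_lt_of_le hz0R hrR
    have := pow_lt_pow_left₀ htr ht.le (n := 2) (by norm_num)
    linarith
  set D : ℝ := 1 - nz with hD_def
  have hD0 : 0 ≤ D := by rw [hD_def]; linarith
  by_cases hcase : A ≤ B'
  · -- main case
    have hsq : A ^ 2 ≤ B' ^ 2 := pow_le_pow_left₀ hA0.le hcase 2
    have h9 : 0 ≤ r ^ 2 * (B' ^ 2 - A ^ 2) :=
      mul_nonneg (sq_nonneg r) (by linarith)
    have h10 : (r ^ 2 - t ^ 2) * 0 ≤ (r ^ 2 - t ^ 2) * (r ^ 2 - nz ^ 2) := by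
      rw [mul_zero]; linarith [hkey, h9]
    have hrz : 0 ≤ r ^ 2 - nz ^ 2 := le_of_mul_le_mul_left h10 hc0
    have h11 : r ^ 2 * (B' ^ 2 - A ^ 2) ≤ r ^ 2 * (r ^ 2 - nz ^ 2) := by
      have h12 : 0 ≤ t ^ 2 * (r ^ 2 - nz ^ 2) := mul_nonneg (sq_nonneg t) hrz
      linarith [hkey, h12]
    have e1 : B' ^ 2 - A ^ 2 ≤ r ^ 2 - nz ^ 2 :=
      le_of_mul_le_mul_left h11 (by positivity)
    have hr2 : r ^ 2 ≤ 1 := by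
      calc r ^ 2 ≤ 1 ^ 2 := pow_le_pow_left₀ hr0.le hr1.le 2
        _ = 1 := one_pow 2
    have e2 : r ^ 2 - nz ^ 2 ≤ 2 * D := by
      have h12 : (1 - nz) * (1 + nz) ≤ (1 - nz) * 2 :=
        mul_le_mul_of_nonneg_left (by linarith) (by linarith)
      rw [hD_def]; linarith [h12, hr2]
    have hBA : B' - A ≤ D / A := by
      rw [le_div_iff₀ hA0]
      linarith [e1, e2, sq_nonneg (B' - A)]
    rw [hGform]
    have hsplit : (A ^ k)⁻¹ - (B' ^ k)⁻¹ = (B' ^ k - A ^ k) / (A ^ k * B' ^ k) := by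
      field_simp
    rw [hsplit, div_le_iff₀ (by positivity)]
    have hkm : k = m + 1 := hm
    have h1 : B' ^ k - A ^ k ≤ ((m:ℝ)+1) * B' ^ m * (B' - A) := by
      rw [hkm]; exact pow_sub_pow_le_aux m A B' hA0.le hcase
    have h2 : ((m:ℝ)+1) * B' ^ m * (B' - A) ≤ ((m:ℝ)+1) * B' ^ m * (D / A) :=
      mul_le_mul_of_nonneg_left hBA (by positivity)
    have hpow : a ^ d ≤ A ^ (m + 2) * B' := by
      have hd' : d = m + 3 := by omega
      rw [hd', pow_succ]
      exact mul_le_mul (pow_le_pow_left₀ ha.le haA _) (haA.trans hcase) ha.le (by positivity)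
    have h3 : ((m:ℝ)+1) * B' ^ m * (D / A) ≤ (k:ℝ) / a ^ d * D * (A ^ k * B' ^ k) := by
      have hkcast : ((k:ℕ):ℝ) = (m:ℝ) + 1 := by rw [hkm]; push_cast; ring
      have hineq : (((m:ℝ)+1) * B' ^ m * D) * a ^ d ≤ ((k:ℝ) * D * (A ^ k * B' ^ k)) * A := by
        calc (((m:ℝ)+1) * B' ^ m * D) * a ^ d = (((m:ℝ)+1) * D * B' ^ m) * a ^ d := by ring
          _ ≤ (((m:ℝ)+1) * D * B' ^ m) * (A ^ (m+2) * B') :=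
              mul_le_mul_of_nonneg_left hpow (by positivity)
          _ = ((k:ℝ) * D * (A ^ k * B' ^ k)) * A := by rw [hkcast, hkm]; ring
      have h4 : ((m:ℝ)+1) * B' ^ m * (D / A) = (((m:ℝ)+1) * B' ^ m * D) / A := by ring
      have h5 : (k:ℝ) / a ^ d * D * (A ^ k * B' ^ k) = ((k:ℝ) * D * (A ^ k * B' ^ k)) / a ^ d := by
        ring
      rw [h4, h5, div_le_div_iff₀ hA0 (by positivity)]
      exact hineq
    linarith
  · -- outside case: G ≤ 0
    rw [not_le] at hcase
    rw [hGform]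
    have h1 : (A ^ k)⁻¹ ≤ (B' ^ k)⁻¹ := by
      apply inv_anti₀ (by positivity)
      exact pow_le_pow_left₀ hB'0.le hcase.le _
    have h2 : (0:ℝ) ≤ (k:ℝ) / a ^ d * D := by positivity
    linarith
end

section
/- For every integer d ≥ 1, every ε ∈ (0,1) and every a ∈ [0, 1−ε], the iterated integral satisfies ∫_a^{1−ε} v^{1−d} ( ∫_0^v r^{d−1}/(1−r)² dr ) dv ≤ log(1/ε). -/
open Real Set MeasureTheory intervalIntegral
open scoped Interval

/-! For `r ≤ v` the inner integrand is at most `v ^ (d - 1) / (1 - r) ^ 2`, so the inner integral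
is at most `v ^ d / (1 - v)` and the outer integrand at most `(1 - v)⁻¹`, whose integral over
`[a, 1 - ε]` is `log ((1 - a) / ε) ≤ log (1 / ε)`. -/

lemma integral_inv_sq_of_pos {a b : ℝ} (ha : 0 < a) (hb : 0 < b) :
    ∫ x in a..b, (x ^ 2)⁻¹ = a⁻¹ - b⁻¹ := by
  have hne : ∀ x ∈ [[a, b]], x ≠ 0 := fun x hx => ((lt_min ha hb).trans_le hx.1).ne'
  have hderiv : ∀ x ∈ [[a, b]], HasDerivAt (fun y => -y⁻¹) (x ^ 2)⁻¹ x := fun x hx => by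
    simpa using (hasDerivAt_inv (hne x hx)).fun_neg
  have hint : IntervalIntegrable (fun x : ℝ => (x ^ 2)⁻¹) volume a b :=
    (continuousOn_inv₀.comp (continuousOn_pow 2) fun x hx =>
      pow_ne_zero 2 (hne x hx)).intervalIntegrable
  rw [integral_eq_sub_of_hasDerivAt hderiv hint]
  ring

lemma integral_inv_one_sub {a b : ℝ} (ha : a < 1) (hb : b < 1) :
    ∫ x in a..b, (1 - x)⁻¹ = log (1 - a) - log (1 - b) := by
  rw [integral_comp_sub_left (fun x => x⁻¹), integral_inv_of_pos (by linarith) (by linarith),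
    log_div (by linarith) (by linarith)]

lemma integral_inv_one_sub_sq {a b : ℝ} (ha : a < 1) (hb : b < 1) :
    ∫ x in a..b, ((1 - x) ^ 2)⁻¹ = (1 - b)⁻¹ - (1 - a)⁻¹ := by
  rw [integral_comp_sub_left (fun x => (x ^ 2)⁻¹),
    integral_inv_sq_of_pos (by linarith) (by linarith)]

lemma integral_pow_div_one_sub_sq_le {v : ℝ} (hv0 : 0 ≤ v) (hv1 : v < 1) (n : ℕ) :
    ∫ r in (0:ℝ)..v, r ^ n / (1 - r) ^ 2 ≤ v ^ (n + 1) / (1 - v) := by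
  have hne : ∀ r ∈ [[0, v]], (1 - r) ^ 2 ≠ 0 := fun r hr => by
    rw [uIcc_of_le hv0] at hr
    exact pow_ne_zero 2 (by linarith [hr.2])
  calc ∫ r in (0:ℝ)..v, r ^ n / (1 - r) ^ 2
      ≤ ∫ r in (0:ℝ)..v, v ^ n * ((1 - r) ^ 2)⁻¹ := by
        refine integral_mono_on hv0
          (ContinuousOn.div (by fun_prop) (by fun_prop) hne).intervalIntegrable
          ((ContinuousOn.inv₀ (by fun_prop) hne).intervalIntegrable.const_mul _) fun r hr => ?_
        rw [← div_eq_mul_inv]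
        gcongr <;> linarith [hr.1, hr.2]
    _ = v ^ (n + 1) / (1 - v) := by
        have : 1 - v ≠ 0 := (sub_pos.2 hv1).ne'
        rw [intervalIntegral.integral_const_mul, integral_inv_one_sub_sq (by norm_num) hv1]
        field_simp
        ring

lemma zpow_one_sub_mul_integral_le {v : ℝ} (hv0 : 0 < v) (hv1 : v < 1) (d : ℕ) :
    v ^ (1 - (d : ℤ)) * ∫ r in (0:ℝ)..v, r ^ (d - 1) / (1 - r) ^ 2 ≤ (1 - v)⁻¹ := by
  calc v ^ (1 - (d : ℤ)) * ∫ r in (0:ℝ)..v, r ^ (d - 1) / (1 - r) ^ 2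
      ≤ v ^ (1 - (d : ℤ)) * (v ^ (d - 1 + 1) / (1 - v)) := by
        gcongr
        exact integral_pow_div_one_sub_sq_le hv0.le hv1 _
    _ ≤ (1 - v)⁻¹ := by
        -- the exponent `1 - d + (d - 1 + 1)` is `1`, or `2` when the truncated `d - 1` is `0`
        have hpow : v ^ (1 - (d : ℤ)) * v ^ (d - 1 + 1) ≤ 1 := by
          rw [← zpow_natCast, ← zpow_add₀ hv0.ne']
          exact zpow_le_one₀ hv0 hv1.le (by omega)
        rw [← mul_div_assoc, div_eq_mul_inv]
        exact mul_le_of_le_one_left (inv_nonneg.2 (sub_pos.2 hv1).le) hpow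

theorem iterated_integral_log_bound_general
    (d : ℕ)
    (ε : ℝ) (hε0 : 0 < ε)
    (a : ℝ) (ha0 : 0 ≤ a) (ha1 : a ≤ 1 - ε) :
    (∫ v in a..(1 - ε), v ^ (1 - (d : ℤ)) * ∫ r in (0:ℝ)..v, r ^ (d - 1) / (1 - r) ^ 2)
      ≤ Real.log (1 / ε) := by
  have ha : a < 1 := by linarith
  have hb : 1 - ε < 1 := by linarith
  have hpos : ∀ v ∈ Ioc a (1 - ε), 0 < v := fun v hv => ha0.trans_lt hv.1
  calc (∫ v in a..(1 - ε), v ^ (1 - (d : ℤ)) * ∫ r in (0:ℝ)..v, r ^ (d - 1) / (1 - r) ^ 2)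
      ≤ ∫ v in a..(1 - ε), (1 - v)⁻¹ := by
        rw [integral_of_le ha1, integral_of_le ha1]
        refine setIntegral_mono_of_nonneg (fun v hv => ?_)
          (fun v hv => zpow_one_sub_mul_integral_le (hpos v hv) (hv.2.trans_lt hb) d) ?_
        · exact mul_nonneg (zpow_nonneg (hpos v hv).le _) (integral_nonneg (hpos v hv).le
            fun r hr => div_nonneg (pow_nonneg hr.1 _) (sq_nonneg _))
        · exact (ContinuousOn.inv₀ (by fun_prop) fun v hv => by
            linarith [hv.2]).integrableOn_Icc.mono_set Ioc_subset_Icc_self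
    _ = log (1 - a) - log ε := by rw [integral_inv_one_sub ha hb, sub_sub_cancel]
    _ ≤ log (1 / ε) := by
        rw [one_div, log_inv]
        linarith [log_nonpos (by linarith : 0 ≤ 1 - a) (by linarith : 1 - a ≤ 1)]

/-- The analytic core of the occupation-time bound: for every integer `d ≥ 1`,
`ε ∈ (0,1)` and `a ∈ [0, 1-ε]`,
`∫_a^{1-ε} v^{1-d} (∫_0^v r^{d-1}/(1-r)² dr) dv ≤ log(1/ε)`. -/
theorem iterated_integral_log_bound
    (d : ℕ) (hd : 1 ≤ d)
    (ε : ℝ) (hε0 : 0 < ε) (hε1 : ε < 1)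
    (a : ℝ) (ha0 : 0 ≤ a) (ha1 : a ≤ 1 - ε) :
    (∫ v in a..(1 - ε), v ^ (1 - (d : ℤ)) * ∫ r in (0:ℝ)..v, r ^ (d - 1) / (1 - r) ^ 2)
      ≤ Real.log (1 / ε) :=
  iterated_integral_log_bound_general d ε hε0 a ha0 ha1
end
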